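/- arXiv:0910.5250 — 2 statements merged into one kernel-verified Lean document; each statement's English description precedes it below -/
import Mathlib

section
/- There do not exist sums of squares of real polynomials σ, σ₀, σ₁,…,σₙ in 2n variables y₁,…,y_{2n} such that y_{n+1}³ + 1/2 = σ(y) + (2n − ‖y‖²)·σ₀(y) + Σ_{j=1}^{n} σ_j(y)·(1 − y_j²) holds identically as polynomials. -/
open MvPolynomial

theorem IsSumSq.map {R S F : Type*} [NonUnitalNonAssocSemiring R] [NonUnitalNonAssocSemiring S]
    [FunLike F R S] [NonUnitalRingHomClass F R S] (f : F) {s : R} (hs : IsSumSq s) :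
    IsSumSq (f s) := by
  induction hs with
  | zero => simp
  | sq_add a _ ih => simpa only [map_add, map_mul] using ih.sq_add (f a)

theorem MvPolynomial.eval_nonneg_of_isSumSq {ι : Type*} {p : MvPolynomial ι ℝ} (hp : IsSumSq p)
    (x : ι → ℝ) : 0 ≤ eval x p :=
  (hp.map (eval x)).nonneg

theorem Fintype.sum_pi_single_sq {ι R : Type*} [DecidableEq ι] [Fintype ι] [Semiring R]
    (k : ι) (a : R) : ∑ i, Pi.single k a i ^ 2 = a ^ 2 := by
  rw [Fintype.sum_eq_single k fun i hi => by simp [Pi.single_eq_of_ne hi], Pi.single_eq_same]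

theorem no_sos_representation (n : ℕ) (hn : 0 < n) :
    ¬ ∃ (σ σ₀ : MvPolynomial (Fin (2 * n)) ℝ)
        (σj : Fin n → MvPolynomial (Fin (2 * n)) ℝ),
      IsSumSq σ ∧ IsSumSq σ₀ ∧ (∀ j, IsSumSq (σj j)) ∧
      (X (⟨n, by omega⟩ : Fin (2 * n))) ^ 3 + C (1 / 2 : ℝ) =
        σ + (C ((2 * n : ℕ) : ℝ) - ∑ i : Fin (2 * n), (X i) ^ 2) * σ₀ +
          ∑ j : Fin n, σj j * (1 - (X (Fin.castLE (by omega) j)) ^ 2) := by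
  rintro ⟨σ, σ₀, σj, hσ, hσ₀, hσj, hrep⟩
  set k : Fin (2 * n) := ⟨n, by omega⟩
  -- The point `-e_{n+1}` lies in the ball and in the box, yet the left side is `-1/2` there.
  set v : Fin (2 * n) → ℝ := Pi.single k (-1)
  have hvk : v k = -1 := Pi.single_eq_same k _
  have hnorm : ∑ i, v i ^ 2 = 1 := by rw [Fintype.sum_pi_single_sq]; norm_num
  have hbox (j : Fin n) : v (Fin.castLE (by omega) j) = 0 :=
    Pi.single_eq_of_ne (Fin.ne_of_lt j.isLt) _
  have hterms : 0 ≤ ∑ j, eval v (σj j) * (1 - v (Fin.castLE (by omega) j) ^ 2) :=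
    Finset.sum_nonneg fun j _ => by simpa [hbox] using eval_nonneg_of_isSumSq (hσj j) v
  have hradius : (1 : ℝ) ≤ ((2 * n : ℕ) : ℝ) := by exact_mod_cast (by omega : 1 ≤ 2 * n)
  have key := congrArg (eval v) hrep
  simp only [map_add, map_mul, map_sub, map_pow, map_sum, map_one, eval_X, eval_C, hvk,
    hnorm] at key
  nlinarith [eval_nonneg_of_isSumSq hσ v, eval_nonneg_of_isSumSq hσ₀ v]
end

section
/- Let A be a unital algebra of real-valued functions on a set X, Q ⊆ A a quadratic module with an algebraic interior point ξ, and suppose Q has the moment property: every linear functional L on A that is nonnegative on Q is represented by a positive Borel measure supported on the positivity set P(Q) = {x ∈ X : h(x) ≥ 0 for all h ∈ Q}. If f ∈ A satisfies f(x) > 0 for all x ∈ P(Q), then f ∈ Q. -/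
/-!
Suppose `f ∉ Q`. Since `ξ` is an algebraic interior point of `Q`, the cone generated by `Q` and
`-f` does not contain `-ξ`, and the Riesz extension theorem yields a linear functional `L ≥ 0` on
`Q` with `L ξ = 1` and `L f ≤ 0`. Representing `L` by a measure `μ` concentrated on `P(Q)`, the
function `f` is `μ`-a.e. positive with `∫ f dμ ≤ 0`, so `μ = 0`, contradicting `∫ ξ dμ = 1`.
-/

open MeasureTheory

def IsAlgebraicInteriorPoint {E : Type*} [AddCommGroup E] [Module ℝ E] (s : Set E) (ξ : E) :
    Prop :=
  ∀ h : E, ∃ ε > (0 : ℝ), ∀ t : ℝ, 0 ≤ t → t < ε → ξ + t • h ∈ s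

namespace IsAlgebraicInteriorPoint

variable {E : Type*} [AddCommGroup E] [Module ℝ E] {s t : Set E} {ξ : E}

theorem mem (hξ : IsAlgebraicInteriorPoint s ξ) : ξ ∈ s := by
  obtain ⟨ε, hε, h⟩ := hξ 0
  simpa using h 0 le_rfl hε

theorem mono (hξ : IsAlgebraicInteriorPoint s ξ) (hst : s ⊆ t) : IsAlgebraicInteriorPoint t ξ :=
  fun h ↦ (hξ h).imp fun _ ⟨hε, hmem⟩ ↦ ⟨hε, fun r hr₀ hr ↦ hst (hmem r hr₀ hr)⟩

theorem exists_smul_add_mem {C : PointedCone ℝ E} (hξ : IsAlgebraicInteriorPoint C ξ) (y : E) :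
    ∃ c : ℝ, 0 ≤ c ∧ c • ξ + y ∈ C := by
  obtain ⟨ε, hε, h⟩ := hξ y
  have ht : 0 < ε / 2 := by positivity
  refine ⟨(ε / 2)⁻¹, by positivity, ?_⟩
  have := C.smul_mem (inv_pos.2 ht).le (h (ε / 2) ht.le (by linarith))
  rwa [smul_add, smul_smul, inv_mul_cancel₀ ht.ne', one_smul] at this

end IsAlgebraicInteriorPoint

namespace PointedCone

variable {E : Type*} [AddCommGroup E] [Module ℝ E] {C : PointedCone ℝ E} {ξ : E}

theorem eq_top_of_neg_mem (hξ : IsAlgebraicInteriorPoint C ξ) (hneg : -ξ ∈ C) : C = ⊤ := by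
  refine Submodule.eq_top_iff'.2 fun y ↦ ?_
  obtain ⟨c, hc, hy⟩ := hξ.exists_smul_add_mem y
  simpa using C.add_mem hy (C.smul_mem hc hneg)

theorem exists_nonneg_eq_one_of_neg_notMem (hξ : IsAlgebraicInteriorPoint C ξ) (hneg : -ξ ∉ C) :
    ∃ L : E →ₗ[ℝ] ℝ, (∀ x ∈ C, 0 ≤ L x) ∧ L ξ = 1 := by
  have hξ₀ : ξ ≠ 0 := by
    rintro rfl
    exact hneg (by simp)
  let L₀ : E →ₗ.[ℝ] ℝ := LinearPMap.mkSpanSingleton ξ 1 hξ₀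
  have hL₀ : ∀ (c : ℝ) (hc : c • ξ ∈ L₀.domain), L₀ ⟨c • ξ, hc⟩ = c := fun c hc ↦
    (LinearPMap.mkSpanSingleton'_apply ξ (1 : ℝ) _ c hc).trans (mul_one c)
  have nonneg : ∀ x : L₀.domain, (x : E) ∈ C → 0 ≤ L₀ x := by
    rintro ⟨x, hx⟩ hxC
    obtain ⟨c, rfl⟩ := Submodule.mem_span_singleton.1 hx
    rw [hL₀]
    by_contra! hc
    refine hneg ?_
    have := C.smul_mem (inv_nonneg.2 (neg_nonneg.2 hc.le)) hxC
    rwa [smul_smul, inv_neg, neg_mul, inv_mul_cancel₀ hc.ne, neg_one_smul] at this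
  have dense : ∀ y, ∃ x : L₀.domain, (x : E) + y ∈ C := fun y ↦ by
    obtain ⟨c, -, hc⟩ := hξ.exists_smul_add_mem y
    exact ⟨⟨c • ξ, Submodule.smul_mem _ c (Submodule.mem_span_singleton_self ξ)⟩, hc⟩
  obtain ⟨L, hLL₀, hLC⟩ := riesz_extension C L₀ nonneg dense
  exact ⟨L, hLC, (hLL₀ _).trans (LinearPMap.mkSpanSingleton_apply ℝ ℝ hξ₀ 1)⟩

theorem exists_separating_of_notMem (hξ : IsAlgebraicInteriorPoint C ξ) {f : E} (hf : f ∉ C) :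
    ∃ L : E →ₗ[ℝ] ℝ, (∀ x ∈ C, 0 ≤ L x) ∧ L ξ = 1 ∧ L f ≤ 0 := by
  let D := C ⊔ hull ℝ {-f}
  have hD : -ξ ∉ D := by
    intro h
    obtain ⟨q, hq, z, hz, hqz⟩ := Submodule.mem_sup.1 h
    obtain ⟨⟨s, hs⟩, rfl⟩ := Submodule.mem_span_singleton.1 hz
    rw [Nonneg.mk_smul] at hqz
    have hsf : s • f = q + ξ := by linear_combination (norm := module) -hqz
    rcases hs.eq_or_lt with rfl | hs
    · have hq' : q = -ξ := by simpa using hqz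
      exact hf ((eq_top_of_neg_mem hξ (hq' ▸ hq)).symm ▸ Submodule.mem_top)
    · exact hf ((C.smul_mem_iff hs).1 (hsf ▸ C.add_mem hq hξ.mem))
  have hCD : C ≤ D := le_sup_left
  obtain ⟨L, hLD, hLξ⟩ := exists_nonneg_eq_one_of_neg_notMem (hξ.mono hCD) hD
  refine ⟨L, fun x hx ↦ hLD x (hCD hx), hLξ, ?_⟩
  simpa using hLD (-f) ((le_sup_right : hull ℝ {-f} ≤ D) (subset_hull rfl))

end PointedCone

theorem MeasureTheory.Integrable.of_forall_eq_integral {X E : Type*} [MeasurableSpace X]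
    [AddCommGroup E] [Module ℝ E] {μ : Measure X} (Φ : E →ₗ[ℝ] X → ℝ) {L : E →ₗ[ℝ] ℝ}
    (hL : ∀ a, L a = ∫ x, Φ a x ∂μ) {ξ : E} (hξ : L ξ ≠ 0) (a : E) : Integrable (Φ a) μ := by
  have key : ∀ b, L b ≠ 0 → Integrable (Φ b) μ := fun b hb ↦ .of_integral_ne_zero (hL b ▸ hb)
  by_cases ha : L a = 0
  · -- non-integrable functions have integral `0`, so go through `a = (a + ξ) - ξ`
    simpa using (key (a + ξ) (by simpa [ha])).sub (key ξ hξ)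
  · exact key a ha

theorem MeasureTheory.Measure.eq_zero_of_integral_nonpos_of_ae_pos {X : Type*}
    [MeasurableSpace X] {μ : Measure X} {f : X → ℝ} (hf : Integrable f μ)
    (hpos : ∀ᵐ x ∂μ, 0 < f x) (hint : ∫ x, f x ∂μ ≤ 0) : μ = 0 := by
  have hnonneg : 0 ≤ᵐ[μ] f := hpos.mono fun _ ↦ le_of_lt
  have hzero : f =ᵐ[μ] 0 := (integral_eq_zero_iff_of_nonneg_ae hnonneg hf).1
    (hint.antisymm (integral_nonneg_of_ae hnonneg))
  refine ae_eq_bot.1 (Filter.eventually_false_iff_eq_bot.1 ?_)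
  filter_upwards [hzero, hpos] with x hx₀ hx
  exact hx.ne' hx₀

theorem mem_quadraticModule_of_pos_general
    {X : Type*} [MeasurableSpace X]
    (A : Subalgebra ℝ (X → ℝ)) (Q : Set A)
    -- Q is a quadratic module: convex cone containing 1, stable under
    -- multiplication by squares of elements of A
    (hQadd : ∀ p ∈ Q, ∀ q ∈ Q, p + q ∈ Q)
    (hQsmul : ∀ c : ℝ, 0 ≤ c → ∀ q ∈ Q, c • q ∈ Q)
    -- ξ is an algebraic interior point of Q
    (ξ : A) (hξQ : ξ ∈ Q)
    (hξ : ∀ h : A, ∃ ε > (0 : ℝ), ∀ t : ℝ, 0 ≤ t → t < ε → ξ + t • h ∈ Q)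
    -- the moment property: every linear functional nonnegative on Q is
    -- represented by a positive Borel measure supported on P(Q)
    (hmoment : ∀ L : A →ₗ[ℝ] ℝ, (∀ q ∈ Q, 0 ≤ L q) →
      ∃ μ : Measure X,
        μ {x : X | ¬ ∀ q ∈ Q, 0 ≤ (q : X → ℝ) x} = 0 ∧
        ∀ a : A, L a = ∫ x, (a : X → ℝ) x ∂μ)
    -- f ∈ A is positive on P(Q)
    (f : A) (hf : ∀ x : X, (∀ q ∈ Q, 0 ≤ (q : X → ℝ) x) → 0 < (f : X → ℝ) x) :
    f ∈ Q := by
  by_contra hfQ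
  let C : PointedCone ℝ A :=
    { carrier := Q
      add_mem' := fun hp hq ↦ hQadd _ hp _ hq
      zero_mem' := by simpa using hQsmul 0 le_rfl ξ hξQ
      smul_mem' := fun c _ hq ↦ hQsmul c c.2 _ hq }
  obtain ⟨L, hLQ, hLξ, hLf⟩ := C.exists_separating_of_notMem hξ hfQ
  obtain ⟨μ, hμ, hrep⟩ := hmoment L hLQ
  have hfμ : ∀ᵐ x ∂μ, 0 < (f : X → ℝ) x := (ae_iff.2 hμ).mono hf
  have hfint : Integrable (f : X → ℝ) μ :=
    Integrable.of_forall_eq_integral A.val.toLinearMap hrep (hLξ ▸ one_ne_zero) f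
  have hμ₀ : μ = 0 := Measure.eq_zero_of_integral_nonpos_of_ae_pos hfint hfμ (hrep f ▸ hLf)
  simpa [hμ₀, hLξ] using hrep ξ

/-- Positivstellensatz for a quadratic module with an algebraic interior point
and the moment property. -/
theorem mem_quadraticModule_of_pos
    {X : Type*} [MeasurableSpace X]
    (A : Subalgebra ℝ (X → ℝ)) (Q : Set A)
    -- Q is a quadratic module: convex cone containing 1, stable under
    -- multiplication by squares of elements of A
    (hQ1 : (1 : A) ∈ Q)
    (hQadd : ∀ p ∈ Q, ∀ q ∈ Q, p + q ∈ Q)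
    (hQsmul : ∀ c : ℝ, 0 ≤ c → ∀ q ∈ Q, c • q ∈ Q)
    (hQsq : ∀ a : A, ∀ q ∈ Q, a ^ 2 * q ∈ Q)
    -- ξ is an algebraic interior point of Q
    (ξ : A) (hξQ : ξ ∈ Q)
    (hξ : ∀ h : A, ∃ ε > (0 : ℝ), ∀ t : ℝ, 0 ≤ t → t < ε → ξ + t • h ∈ Q)
    -- the moment property: every linear functional nonnegative on Q is
    -- represented by a positive Borel measure supported on P(Q)
    (hmoment : ∀ L : A →ₗ[ℝ] ℝ, (∀ q ∈ Q, 0 ≤ L q) →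
      ∃ μ : Measure X,
        μ {x : X | ¬ ∀ q ∈ Q, 0 ≤ (q : X → ℝ) x} = 0 ∧
        ∀ a : A, L a = ∫ x, (a : X → ℝ) x ∂μ)
    -- f ∈ A is positive on P(Q)
    (f : A) (hf : ∀ x : X, (∀ q ∈ Q, 0 ≤ (q : X → ℝ) x) → 0 < (f : X → ℝ) x) :
    f ∈ Q :=
  mem_quadraticModule_of_pos_general A Q hQadd hQsmul ξ hξQ hξ hmoment f hf
end
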